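/- arXiv:2401.02054 — 10 statements merged into one kernel-verified Lean document; each statement's English description precedes it below -/
import Mathlib

section
/- Let Ā ∈ ℝ^{n×n}, B̄ ∈ ℝ^{n×m}, and let P be a real symmetric positive definite n×n matrix satisfying Āᵀ P Ā − P = −I. Let λ > 0 be such that xᵀ P x ≤ λ‖x‖² for every x ∈ ℝⁿ, let c > 1, and set μ = 1 − ((c−1)/c)·(1/λ). Then for every e ∈ ℝⁿ and w̃ ∈ ℝᵐ, (Ā e + B̄ w̃)ᵀ P (Ā e + B̄ w̃) ≤ μ·(eᵀ P e) + c‖Āᵀ P B̄ w̃‖² + w̃ᵀ B̄ᵀ P B̄ w̃. -/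
open Matrix

/-- Let `Ā ∈ ℝ^{n×n}`, `B̄ ∈ ℝ^{n×m}`, and `P` real symmetric positive
definite with `Āᵀ P Ā − P = −I`. Let `λ > 0` satisfy `xᵀ P x ≤ λ‖x‖²` for all `x`
(here `‖x‖² = x ⬝ᵥ x` is the squared Euclidean norm), let `c > 1`, and set
`μ = 1 − ((c−1)/c)·(1/λ)`. Then for every `e ∈ ℝⁿ` and `w̃ ∈ ℝᵐ`,
`(Ā e + B̄ w̃)ᵀ P (Ā e + B̄ w̃) ≤ μ (eᵀ P e) + c‖Āᵀ P B̄ w̃‖² + w̃ᵀ B̄ᵀ P B̄ w̃`. -/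
theorem stmt_1 {n m : ℕ} (Abar : Matrix (Fin n) (Fin n) ℝ) (Bbar : Matrix (Fin n) (Fin m) ℝ)
    (P : Matrix (Fin n) (Fin n) ℝ) (hPsymm : P.IsSymm) (hPpos : P.PosDef)
    (hLyap : Abarᵀ * P * Abar - P = -1)
    (lam : ℝ) (hlam : 0 < lam)
    (hbound : ∀ x : Fin n → ℝ, x ⬝ᵥ P.mulVec x ≤ lam * (x ⬝ᵥ x))
    (c : ℝ) (hc : 1 < c) (μ : ℝ) (hμ : μ = 1 - ((c - 1) / c) * (1 / lam))
    (e : Fin n → ℝ) (w : Fin m → ℝ) :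
    (Abar.mulVec e + Bbar.mulVec w) ⬝ᵥ P.mulVec (Abar.mulVec e + Bbar.mulVec w) ≤
      μ * (e ⬝ᵥ P.mulVec e)
        + c * ((Abarᵀ * P * Bbar).mulVec w ⬝ᵥ (Abarᵀ * P * Bbar).mulVec w)
        + w ⬝ᵥ (Bbarᵀ * P * Bbar).mulVec w := by
  set a := Abar.mulVec e with ha
  set b := Bbar.mulVec w with hb
  set v := (Abarᵀ * P * Bbar).mulVec w with hv
  have key : ∀ {k l : ℕ} (M : Matrix (Fin k) (Fin l) ℝ) (x : Fin k → ℝ) (y : Fin l → ℝ),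
      x ⬝ᵥ M.mulVec y = Mᵀ.mulVec x ⬝ᵥ y := by
    intro k l M x y; rw [Matrix.dotProduct_mulVec, Matrix.mulVec_transpose]
  have hcross : a ⬝ᵥ P.mulVec b = e ⬝ᵥ v := by
    symm
    rw [hv, ← Matrix.mulVec_mulVec, ← Matrix.mulVec_mulVec, key, Matrix.transpose_transpose]
  have hbPa : b ⬝ᵥ P.mulVec a = e ⬝ᵥ v := by
    rw [← hcross, key, ← dotProduct_comm, hPsymm.eq]
  have h1 : Abarᵀ * P * Abar = P - 1 := by
    have h := sub_eq_iff_eq_add.mp hLyap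
    rw [h, neg_add_eq_sub]
  have hAPA : a ⬝ᵥ P.mulVec a = e ⬝ᵥ P.mulVec e - e ⬝ᵥ e := by
    have h2 : a ⬝ᵥ P.mulVec a = e ⬝ᵥ (Abarᵀ * P * Abar).mulVec e := by
      symm
      rw [← Matrix.mulVec_mulVec, ← Matrix.mulVec_mulVec, key, Matrix.transpose_transpose]
    rw [h2, h1, Matrix.sub_mulVec, Matrix.one_mulVec, dotProduct_sub]
  have hbPb : b ⬝ᵥ P.mulVec b = w ⬝ᵥ (Bbarᵀ * P * Bbar).mulVec w := by
    symm
    rw [← Matrix.mulVec_mulVec, ← Matrix.mulVec_mulVec, key, Matrix.transpose_transpose]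
  have expand : (a + b) ⬝ᵥ P.mulVec (a + b)
      = a ⬝ᵥ P.mulVec a + 2 * (e ⬝ᵥ v) + b ⬝ᵥ P.mulVec b := by
    rw [Matrix.mulVec_add, dotProduct_add, add_dotProduct,
      add_dotProduct, hcross, hbPa]; ring
  have hc0 : 0 < c := by linarith
  have young : 2 * (e ⬝ᵥ v) ≤ (1 / c) * (e ⬝ᵥ e) + c * (v ⬝ᵥ v) := by
    have h : ∀ i, 2 * (e i * v i) ≤ (1/c) * (e i * e i) + c * (v i * v i) := by
      intro i
      have hkey : (1/c) * (e i * e i) + c * (v i * v i) - 2 * (e i * v i)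
          = (1/c) * (e i - c * v i)^2 := by field_simp; ring
      nlinarith [mul_nonneg (by positivity : (0:ℝ) ≤ 1/c) (sq_nonneg (e i - c * v i))]
    calc 2 * (e ⬝ᵥ v) = ∑ i, 2 * (e i * v i) := by
          simp [dotProduct, Finset.mul_sum]
      _ ≤ ∑ i, ((1/c) * (e i * e i) + c * (v i * v i)) := Finset.sum_le_sum fun i _ => h i
      _ = (1 / c) * (e ⬝ᵥ e) + c * (v ⬝ᵥ v) := by
          simp [dotProduct, Finset.mul_sum, Finset.sum_add_distrib]
  have hstep := hbound e
  have hcoef : 0 < (c - 1) / (c * lam) := div_pos (by linarith) (by positivity)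
  have key2 : μ * (e ⬝ᵥ P.mulVec e)
      = e ⬝ᵥ P.mulVec e - ((c-1)/(c*lam)) * (e ⬝ᵥ P.mulVec e) := by
    rw [hμ]; field_simp
  have h2 : ((c-1)/(c*lam)) * (e ⬝ᵥ P.mulVec e) ≤ ((c-1)/(c*lam)) * (lam * (e ⬝ᵥ e)) :=
    mul_le_mul_of_nonneg_left hstep hcoef.le
  have h3 : ((c-1)/(c*lam)) * (lam * (e ⬝ᵥ e)) = (e ⬝ᵥ e) - (1/c) * (e ⬝ᵥ e) := by
    field_simp
  rw [expand, hAPA, hbPb, key2]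
  linarith [young, h2, h3]
end

section
/- Let Ā ∈ ℝ^{n×n}, B̄ ∈ ℝ^{n×m}, and let P be a real symmetric positive definite n×n matrix satisfying Āᵀ P Ā − P = −I. Let λ ≥ 1 be such that xᵀ P x ≤ λ‖x‖² for every x ∈ ℝⁿ, let c > 1, and set μ = 1 − ((c−1)/c)·(1/λ). Let W̃ ⊆ ℝᵐ and ρ ∈ ℝ satisfy ρ ≥ c‖Āᵀ P B̄ w̃‖² + w̃ᵀ B̄ᵀ P B̄ w̃ for every w̃ ∈ W̃, and let V₀max ∈ ℝ satisfy e₀ᵀ P e₀ ≤ V₀max for every e₀ ∈ E₀ ⊆ ℝⁿ. Define ξ_k = max{μᵏ V₀max + ((1 − μᵏ)/(1 − μ))ρ, ρ/(1 − μ)}. Then for any sequence (e_k) in ℝⁿ with e₀ ∈ E₀ and e_{k+1} = Ā e_k + B̄ w̃_k where w̃_k ∈ W̃ for all k, it holds that e_kᵀ P e_k ≤ ξ_k for every k ∈ ℕ. -/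
open Matrix

/-- With `P ≻ 0` symmetric solving `Āᵀ P Ā − P = −I`, `λ ≥ 1` an upper
bound on the quadratic form (`xᵀ P x ≤ λ‖x‖²`, with `‖x‖² = x ⬝ᵥ x` the squared
Euclidean norm), `c > 1`, `μ = 1 − ((c−1)/c)(1/λ)`, `ρ` an upper bound of
`c‖Āᵀ P B̄ w̃‖² + w̃ᵀ B̄ᵀ P B̄ w̃` over `w̃ ∈ W̃`, `V₀max` an upper bound of `e₀ᵀ P e₀`
over `e₀ ∈ E₀`, and `ξ_k = max{μᵏ V₀max + ((1 − μᵏ)/(1 − μ))ρ, ρ/(1 − μ)}`: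
any error sequence `e_{k+1} = Ā e_k + B̄ w̃_k` with `e₀ ∈ E₀`, `w̃_k ∈ W̃`
satisfies `e_kᵀ P e_k ≤ ξ_k` for all `k`. -/
theorem stmt_4 {n m : ℕ} (Abar : Matrix (Fin n) (Fin n) ℝ) (Bbar : Matrix (Fin n) (Fin m) ℝ)
    (P : Matrix (Fin n) (Fin n) ℝ) (hPsymm : P.IsSymm) (hPpos : P.PosDef)
    (hLyap : Abarᵀ * P * Abar - P = -1)
    (lam : ℝ) (hlam : 1 ≤ lam)
    (hbound : ∀ x : Fin n → ℝ, x ⬝ᵥ P.mulVec x ≤ lam * (x ⬝ᵥ x))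
    (c : ℝ) (hc : 1 < c) (μ : ℝ) (hμ : μ = 1 - ((c - 1) / c) * (1 / lam))
    (Wt : Set (Fin m → ℝ)) (ρ : ℝ)
    (hρ : ∀ w ∈ Wt,
      c * ((Abarᵀ * P * Bbar).mulVec w ⬝ᵥ (Abarᵀ * P * Bbar).mulVec w)
        + w ⬝ᵥ (Bbarᵀ * P * Bbar).mulVec w ≤ ρ)
    (E0 : Set (Fin n → ℝ)) (V0max : ℝ)
    (hV0 : ∀ e0 ∈ E0, e0 ⬝ᵥ P.mulVec e0 ≤ V0max)
    (ξ : ℕ → ℝ)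
    (hξ : ∀ k : ℕ, ξ k = max (μ ^ k * V0max + ((1 - μ ^ k) / (1 - μ)) * ρ) (ρ / (1 - μ)))
    (e : ℕ → Fin n → ℝ) (w : ℕ → Fin m → ℝ)
    (he0 : e 0 ∈ E0) (hw : ∀ k : ℕ, w k ∈ Wt)
    (hrec : ∀ k : ℕ, e (k + 1) = Abar.mulVec (e k) + Bbar.mulVec (w k)) :
    ∀ k : ℕ, e k ⬝ᵥ P.mulVec (e k) ≤ ξ k := by
  -- basic positivity facts
  have hcpos : (0:ℝ) < c := lt_trans one_pos hc
  have hlampos : (0:ℝ) < lam := lt_of_lt_of_le one_pos hlam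
  have hdpos : 0 < (c - 1) / c := div_pos (by linarith) hcpos
  have hd1 : (c - 1) / c < 1 := (div_lt_one hcpos).mpr (by linarith)
  have hinvpos : 0 < 1 / lam := by positivity
  have hinv1 : 1 / lam ≤ 1 := by
    rw [div_le_one hlampos]; exact hlam
  have hμ0 : 0 ≤ μ := by
    rw [hμ]
    nlinarith
  have hμ1 : μ < 1 := by
    rw [hμ]
    nlinarith
  have h1μ : (0:ℝ) < 1 - μ := by linarith
  -- dot product helper
  have mv_dot : ∀ {p q : ℕ} (A : Matrix (Fin p) (Fin q) ℝ) (x : Fin q → ℝ) (y : Fin p → ℝ),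
      A.mulVec x ⬝ᵥ y = x ⬝ᵥ Aᵀ.mulVec y := by
    intro p q A x y
    rw [dotProduct_comm, Matrix.dotProduct_mulVec, ← Matrix.mulVec_transpose,
      dotProduct_comm]
  have dot_self_nonneg : ∀ {p : ℕ} (v : Fin p → ℝ), 0 ≤ v ⬝ᵥ v := by
    intro p v
    exact Finset.sum_nonneg fun i _ => mul_self_nonneg (v i)
  -- Lyapunov identity
  have hA : Abarᵀ * P * Abar = P - 1 := by
    rw [sub_eq_iff_eq_add] at hLyap
    rw [hLyap, neg_add_eq_sub]
  -- expansion of the quadratic form along the recursion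
  have key : ∀ (x : Fin n → ℝ) (y : Fin m → ℝ),
      (Abar.mulVec x + Bbar.mulVec y) ⬝ᵥ P.mulVec (Abar.mulVec x + Bbar.mulVec y)
        = x ⬝ᵥ P.mulVec x - x ⬝ᵥ x
          + 2 * (x ⬝ᵥ (Abarᵀ * P * Bbar).mulVec y)
          + y ⬝ᵥ (Bbarᵀ * P * Bbar).mulVec y := by
    intro x y
    have t1 : Abar.mulVec x ⬝ᵥ P.mulVec (Abar.mulVec x) = x ⬝ᵥ P.mulVec x - x ⬝ᵥ x := by
      rw [mv_dot, Matrix.mulVec_mulVec, Matrix.mulVec_mulVec, hA, Matrix.sub_mulVec,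
        Matrix.one_mulVec, dotProduct_sub]
    have t2 : Abar.mulVec x ⬝ᵥ P.mulVec (Bbar.mulVec y)
        = x ⬝ᵥ (Abarᵀ * P * Bbar).mulVec y := by
      rw [mv_dot, Matrix.mulVec_mulVec, Matrix.mulVec_mulVec]
    have t3 : Bbar.mulVec y ⬝ᵥ P.mulVec (Abar.mulVec x)
        = x ⬝ᵥ (Abarᵀ * P * Bbar).mulVec y := by
      rw [mv_dot, Matrix.mulVec_mulVec, Matrix.mulVec_mulVec, dotProduct_comm,
        mv_dot, Matrix.transpose_mul, Matrix.transpose_mul, Matrix.transpose_transpose,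
        hPsymm.eq, ← Matrix.mul_assoc]
    have t4 : Bbar.mulVec y ⬝ᵥ P.mulVec (Bbar.mulVec y)
        = y ⬝ᵥ (Bbarᵀ * P * Bbar).mulVec y := by
      rw [mv_dot, Matrix.mulVec_mulVec, Matrix.mulVec_mulVec]
    rw [Matrix.mulVec_add, dotProduct_add, add_dotProduct,
      add_dotProduct, t1, t2, t3, t4]
    ring
  -- Young's inequality
  have young : ∀ (a b : Fin n → ℝ), 2 * (a ⬝ᵥ b) ≤ (1 / c) * (a ⬝ᵥ a) + c * (b ⬝ᵥ b) := by
    intro a b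
    have hnn := dot_self_nonneg (a - c • b)
    have hexp : (a - c • b) ⬝ᵥ (a - c • b)
        = a ⬝ᵥ a - 2 * c * (a ⬝ᵥ b) + c ^ 2 * (b ⬝ᵥ b) := by
      rw [sub_dotProduct, dotProduct_sub, dotProduct_sub,
        smul_dotProduct, dotProduct_smul, dotProduct_smul,
        dotProduct_comm b a]
      simp [smul_eq_mul]
      ring
    rw [hexp] at hnn
    have hc1 : c * (1 / c) = 1 := mul_one_div_cancel (ne_of_gt hcpos)
    nlinarith [hnn, hcpos, hc1, dot_self_nonneg a, dot_self_nonneg b]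
  -- one-step decrease
  have hstep : ∀ k : ℕ, e (k + 1) ⬝ᵥ P.mulVec (e (k + 1))
      ≤ μ * (e k ⬝ᵥ P.mulVec (e k)) + ρ := by
    intro k
    rw [hrec k, key]
    set V := e k ⬝ᵥ P.mulVec (e k) with hV
    set E2 := e k ⬝ᵥ e k with hE2
    set u := (Abarᵀ * P * Bbar).mulVec (w k) with hu
    have hY := young (e k) u
    have hρk := hρ (w k) (hw k)
    have hE := hbound (e k)
    have hdiv : (1 / lam) * V ≤ E2 := by
      rw [one_div, inv_mul_le_iff₀ hlampos]
      exact hE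
    have hmul : ((c - 1) / c) * ((1 / lam) * V) ≤ ((c - 1) / c) * E2 :=
      mul_le_mul_of_nonneg_left hdiv (le_of_lt hdpos)
    have hc1 : c * (1 / c) = 1 := mul_one_div_cancel (ne_of_gt hcpos)
    have hμV : μ * V = V - ((c - 1) / c) * ((1 / lam) * V) := by
      rw [hμ]; ring
    have hsplit : (1 / c) * E2 - E2 = -(((c - 1) / c) * E2) := by
      field_simp
      ring
    rw [hμV]
    linarith [hY, hρk, hmul]
  -- induction
  have claim : ∀ k : ℕ, e k ⬝ᵥ P.mulVec (e k)
      ≤ μ ^ k * V0max + ((1 - μ ^ k) / (1 - μ)) * ρ := by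
    intro k
    induction k with
    | zero => simpa using hV0 (e 0) he0
    | succ k ih =>
      have h := hstep k
      have h2 : μ * (e k ⬝ᵥ P.mulVec (e k))
          ≤ μ * (μ ^ k * V0max + ((1 - μ ^ k) / (1 - μ)) * ρ) :=
        mul_le_mul_of_nonneg_left ih hμ0
      have heq : μ * (μ ^ k * V0max + ((1 - μ ^ k) / (1 - μ)) * ρ) + ρ
          = μ ^ (k + 1) * V0max + ((1 - μ ^ (k + 1)) / (1 - μ)) * ρ := by
        field_simp
        ring
      linarith
  intro k
  rw [hξ]
  exact le_trans (claim k) (le_max_left _ _)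
end

section
/- Let Ā ∈ ℝ^{n×n}, B̄ ∈ ℝ^{n×m}, let E₀ ⊆ ℝⁿ and W̃ ⊆ ℝᵐ be compact sets that are symmetric about the origin (S = −S), and let L_1, …, L_{n_L} ∈ ℝⁿ. Define recursively w_{max}(0,j) = 0 and w_{max}(k,j) = w_{max}(k−1,j) + max_{w̃ ∈ W̃} L_jᵀ Ā^{k−1} B̄ w̃, and set y_{max}(k,j) = max_{e₀ ∈ E₀} L_jᵀ Āᵏ e₀ + w_{max}(k,j). Then for any sequence (e_k) in ℝⁿ with e₀ ∈ E₀ and e_{k+1} = Ā e_k + B̄ w̃_k where w̃_k ∈ W̃ for all k, it holds for every k ∈ ℕ and every j ∈ {1,…,n_L} that |L_jᵀ e_k| ≤ y_{max}(k,j); that is, e_k belongs to the polyhedral set Ω_k = {e ∈ ℝⁿ : |L_jᵀ e| ≤ y_{max}(k,j) for j = 1,…,n_L}. -/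
open Matrix Pointwise

lemma key_abs_le {p q : ℕ} {S : Set (Fin p → ℝ)} (hc : IsCompact S) (hsym : S = -S)
    (v : Fin q → ℝ) (M : Matrix (Fin q) (Fin p) ℝ) {x} (hx : x ∈ S) :
    |v ⬝ᵥ M.mulVec x| ≤ sSup ((fun y => v ⬝ᵥ M.mulVec y) '' S) := by
  set f : (Fin p → ℝ) →ₗ[ℝ] ℝ :=
    { toFun := fun y => v ⬝ᵥ M.mulVec y
      map_add' := fun a b => by simp [Matrix.mulVec_add, dotProduct_add]
      map_smul' := fun c a => by simp [Matrix.mulVec_smul, dotProduct_smul] }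
  have hcont : Continuous f := f.continuous_of_finiteDimensional
  have hbdd : BddAbove ((fun y => v ⬝ᵥ M.mulVec y) '' S) := by
    have := (hc.image hcont).bddAbove
    simpa [f] using this
  rw [abs_le]
  constructor
  · have hnx : -x ∈ S := by
      rw [hsym]; exact Set.neg_mem_neg.mpr hx
    have : v ⬝ᵥ M.mulVec (-x) ≤ sSup ((fun y => v ⬝ᵥ M.mulVec y) '' S) :=
      le_csSup hbdd ⟨-x, hnx, rfl⟩
    simpa [Matrix.mulVec_neg, dotProduct_neg, neg_le] using this
  · exact le_csSup hbdd ⟨x, hx, rfl⟩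

/-- Polyhedral observer-error bounding. With `E₀ ⊆ ℝⁿ`, `W̃ ⊆ ℝᵐ`
compact and symmetric about the origin, directions `L_1,…,L_{n_L}`, and
`w_max(0,j) = 0`, `w_max(k,j) = w_max(k−1,j) + max_{w̃∈W̃} L_jᵀ Ā^{k−1} B̄ w̃`,
`y_max(k,j) = max_{e₀∈E₀} L_jᵀ Āᵏ e₀ + w_max(k,j)` (maxima written as `sSup` of the
image sets, which are attained by compactness): every trajectory
`e_{k+1} = Ā e_k + B̄ w̃_k`, `e₀ ∈ E₀`, `w̃_k ∈ W̃`, satisfies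
`|L_jᵀ e_k| ≤ y_max(k,j)` for all `k` and `j`. -/
theorem stmt_6 {n m nL : ℕ} (Abar : Matrix (Fin n) (Fin n) ℝ) (Bbar : Matrix (Fin n) (Fin m) ℝ)
    (E0 : Set (Fin n → ℝ)) (Wt : Set (Fin m → ℝ))
    (hE0c : IsCompact E0) (hWtc : IsCompact Wt)
    (hE0sym : E0 = -E0) (hWtsym : Wt = -Wt)
    (L : Fin nL → Fin n → ℝ)
    (wmax ymax : ℕ → Fin nL → ℝ)
    (hw0 : ∀ j, wmax 0 j = 0)
    (hw : ∀ (k : ℕ) (j : Fin nL),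
      wmax (k + 1) j = wmax k j + sSup ((fun w => L j ⬝ᵥ (Abar ^ k * Bbar).mulVec w) '' Wt))
    (hy : ∀ (k : ℕ) (j : Fin nL),
      ymax k j = sSup ((fun e0 => L j ⬝ᵥ (Abar ^ k).mulVec e0) '' E0) + wmax k j)
    (e : ℕ → Fin n → ℝ) (w : ℕ → Fin m → ℝ)
    (he0 : e 0 ∈ E0) (hwmem : ∀ k : ℕ, w k ∈ Wt)
    (hrec : ∀ k : ℕ, e (k + 1) = Abar.mulVec (e k) + Bbar.mulVec (w k)) :
    ∀ (k : ℕ) (j : Fin nL), |L j ⬝ᵥ e k| ≤ ymax k j := by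
  -- wmax as a finite sum
  have hwsum : ∀ (k : ℕ) (j : Fin nL),
      wmax k j = ∑ i ∈ Finset.range k,
        sSup ((fun w => L j ⬝ᵥ (Abar ^ i * Bbar).mulVec w) '' Wt) := by
    intro k j
    induction k with
    | zero => simp [hw0]
    | succ k ih => rw [hw, ih, Finset.sum_range_succ]
  -- strengthened induction
  have main : ∀ (k : ℕ) (v : Fin n → ℝ),
      |v ⬝ᵥ e k| ≤ sSup ((fun e0 => v ⬝ᵥ (Abar ^ k).mulVec e0) '' E0)
        + ∑ i ∈ Finset.range k,
            sSup ((fun w => v ⬝ᵥ (Abar ^ i * Bbar).mulVec w) '' Wt) := by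
    intro k
    induction k with
    | zero =>
      intro v
      simpa [Matrix.one_mulVec] using
        key_abs_le hE0c hE0sym v (1 : Matrix (Fin n) (Fin n) ℝ) he0
    | succ k ih =>
      intro v
      have hrw : v ⬝ᵥ e (k + 1) = (v ᵥ* Abar) ⬝ᵥ e k + v ⬝ᵥ Bbar.mulVec (w k) := by
        rw [hrec k, dotProduct_add, Matrix.dotProduct_mulVec]
      have h1 := ih (v ᵥ* Abar)
      have h2 : |v ⬝ᵥ Bbar.mulVec (w k)|
          ≤ sSup ((fun w => v ⬝ᵥ (Abar ^ 0 * Bbar).mulVec w) '' Wt) := by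
        simpa using key_abs_le hWtc hWtsym v Bbar (hwmem k)
      have hshift1 : (fun e0 => (v ᵥ* Abar) ⬝ᵥ (Abar ^ k).mulVec e0)
          = fun e0 => v ⬝ᵥ (Abar ^ (k + 1)).mulVec e0 := by
        funext e0
        rw [← Matrix.dotProduct_mulVec, Matrix.mulVec_mulVec, ← pow_succ']
      have hshift2 : ∀ i, (fun w => (v ᵥ* Abar) ⬝ᵥ (Abar ^ i * Bbar).mulVec w)
          = fun w => v ⬝ᵥ (Abar ^ (i + 1) * Bbar).mulVec w := by
        intro i
        funext w
        rw [← Matrix.dotProduct_mulVec, Matrix.mulVec_mulVec, ← Matrix.mul_assoc, ← pow_succ']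
      rw [hshift1] at h1
      calc |v ⬝ᵥ e (k + 1)| ≤ |(v ᵥ* Abar) ⬝ᵥ e k| + |v ⬝ᵥ Bbar.mulVec (w k)| := by
            rw [hrw]; exact abs_add_le _ _
        _ ≤ sSup ((fun e0 => v ⬝ᵥ (Abar ^ (k+1)).mulVec e0) '' E0)
            + ∑ i ∈ Finset.range k,
                sSup ((fun w => (v ᵥ* Abar) ⬝ᵥ (Abar ^ i * Bbar).mulVec w) '' Wt)
            + sSup ((fun w => v ⬝ᵥ (Abar ^ 0 * Bbar).mulVec w) '' Wt) := by
            exact add_le_add h1 h2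
        _ = sSup ((fun e0 => v ⬝ᵥ (Abar ^ (k+1)).mulVec e0) '' E0)
            + ∑ i ∈ Finset.range (k+1),
                sSup ((fun w => v ⬝ᵥ (Abar ^ i * Bbar).mulVec w) '' Wt) := by
            rw [Finset.sum_range_succ']
            simp only [hshift2]
            ring
  intro k j
  rw [hy, hwsum]
  exact main k (L j)
end

section
/- For every n ∈ ℕ and every k ≥ 1, Y_{cl,n,k} ⊕ (C_cl A_cl^{k−1} B_w)·Ω_n ⊆ Y_{cl,n+1,k−1}. -/
open Matrix Pointwise Filter

/-- Pontryagin difference of sets: `A ⊖ B = {z | z + v ∈ A for all v ∈ B}`. -/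
def pDiff {d : ℕ} (A B : Set (Fin d → ℝ)) : Set (Fin d → ℝ) :=
  {z | ∀ v ∈ B, z + v ∈ A}

/-- `ℰˣ(n,k) = ⊕_{i=0}^{k-1} (A_cl^{k-1-i} B_w)·Ω_{n+i}` (Minkowski sum of linear
images), with the empty sum `ℰˣ(n,0) = {0}`. -/
def calEx {nx ne : ℕ} (Acl : Matrix (Fin nx) (Fin nx) ℝ)
    (Bw : Matrix (Fin nx) (Fin ne) ℝ) (Ω : ℕ → Set (Fin ne → ℝ)) (n k : ℕ) :
    Set (Fin nx → ℝ) :=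
  ∑ i ∈ Finset.range k, (Acl ^ (k - 1 - i) * Bw).mulVec '' Ω (n + i)

/-- `ℰʸ(n,k) = D_w·Ω_{n+k} ⊕ C_cl·ℰˣ(n,k)`. -/
def calEy {nx ne ny : ℕ} (Acl : Matrix (Fin nx) (Fin nx) ℝ)
    (Bw : Matrix (Fin nx) (Fin ne) ℝ) (Ccl : Matrix (Fin ny) (Fin nx) ℝ)
    (Dw : Matrix (Fin ny) (Fin ne) ℝ) (Ω : ℕ → Set (Fin ne → ℝ)) (n k : ℕ) :
    Set (Fin ny → ℝ) :=
  Dw.mulVec '' Ω (n + k) + Ccl.mulVec '' calEx Acl Bw Ω n k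

/-- `Y_{cl,n,k} = Y_cl ⊖ ℰʸ(n,k)`. -/
def Yclset {nx ne ny : ℕ} (Acl : Matrix (Fin nx) (Fin nx) ℝ)
    (Bw : Matrix (Fin nx) (Fin ne) ℝ) (Ccl : Matrix (Fin ny) (Fin nx) ℝ)
    (Dw : Matrix (Fin ny) (Fin ne) ℝ) (Ycl : Set (Fin ny → ℝ))
    (Ω : ℕ → Set (Fin ne → ℝ)) (n k : ℕ) : Set (Fin ny → ℝ) :=
  pDiff Ycl (calEy Acl Bw Ccl Dw Ω n k)

/-- `H^y_k = D_cl + C_cl (I − A_cl)⁻¹ (I − A_cl^k) B_cl`. -/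
noncomputable def Hy {nx nv ny : ℕ} (Acl : Matrix (Fin nx) (Fin nx) ℝ)
    (Bcl : Matrix (Fin nx) (Fin nv) ℝ) (Ccl : Matrix (Fin ny) (Fin nx) ℝ)
    (Dcl : Matrix (Fin ny) (Fin nv) ℝ) (k : ℕ) : Matrix (Fin ny) (Fin nv) ℝ :=
  Dcl + Ccl * (1 - Acl)⁻¹ * (1 - Acl ^ k) * Bcl

/-- `H^y_∞ = D_cl + C_cl (I − A_cl)⁻¹ B_cl`. -/
noncomputable def Hyinf {nx nv ny : ℕ} (Acl : Matrix (Fin nx) (Fin nx) ℝ)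
    (Bcl : Matrix (Fin nx) (Fin nv) ℝ) (Ccl : Matrix (Fin ny) (Fin nx) ℝ)
    (Dcl : Matrix (Fin ny) (Fin nv) ℝ) : Matrix (Fin ny) (Fin nv) ℝ :=
  Dcl + Ccl * (1 - Acl)⁻¹ * Bcl

/-- `Õ_{∞,n} = {(v, x̂) : H^y_∞ v ∈ Ỹ_n and H^y_k v + C_cl A_cl^k x̂ ∈ Y_{cl,n,k} ∀k}`. -/
def Otilde {nx nv ne ny : ℕ} (Acl : Matrix (Fin nx) (Fin nx) ℝ)
    (Bcl : Matrix (Fin nx) (Fin nv) ℝ) (Bw : Matrix (Fin nx) (Fin ne) ℝ)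
    (Ccl : Matrix (Fin ny) (Fin nx) ℝ) (Dcl : Matrix (Fin ny) (Fin nv) ℝ)
    (Dw : Matrix (Fin ny) (Fin ne) ℝ) (Ycl : Set (Fin ny → ℝ))
    (Ω : ℕ → Set (Fin ne → ℝ)) (Ytil : ℕ → Set (Fin ny → ℝ)) (n : ℕ) :
    Set ((Fin nv → ℝ) × (Fin nx → ℝ)) :=
  {p | (Hyinf Acl Bcl Ccl Dcl).mulVec p.1 ∈ Ytil n ∧
       ∀ k : ℕ, (Hy Acl Bcl Ccl Dcl k).mulVec p.1 + (Ccl * Acl ^ k).mulVec p.2 ∈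
         Yclset Acl Bw Ccl Dw Ycl Ω n k}

lemma calEx_split {nx ne : ℕ} (Acl : Matrix (Fin nx) (Fin nx) ℝ)
    (Bw : Matrix (Fin nx) (Fin ne) ℝ) (Ω : ℕ → Set (Fin ne → ℝ)) (n m : ℕ) :
    calEx Acl Bw Ω n (m + 1) =
      (Acl ^ m * Bw).mulVec '' Ω n + calEx Acl Bw Ω (n + 1) m := by
  unfold calEx
  rw [Finset.sum_range_succ']
  simp only [Nat.add_sub_cancel, Nat.sub_zero, pow_zero]
  rw [add_comm]
  congr 1
  apply Finset.sum_congr rfl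
  intro i hi
  rw [show m - (i + 1) = m - 1 - i from by omega,
    show n + (i + 1) = n + 1 + i from by omega]

/-- For every `n ∈ ℕ` and every `k ≥ 1`,
`Y_{cl,n,k} ⊕ (C_cl A_cl^{k−1} B_w)·Ω_n ⊆ Y_{cl,n+1,k−1}`. -/
theorem stmt_8 {nx ne ny : ℕ} (Acl : Matrix (Fin nx) (Fin nx) ℝ)
    (Bw : Matrix (Fin nx) (Fin ne) ℝ) (Ccl : Matrix (Fin ny) (Fin nx) ℝ)
    (Dw : Matrix (Fin ny) (Fin ne) ℝ) (Ycl : Set (Fin ny → ℝ))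
    (Ω : ℕ → Set (Fin ne → ℝ)) :
    ∀ (n k : ℕ), 1 ≤ k →
      Yclset Acl Bw Ccl Dw Ycl Ω n k + (Ccl * Acl ^ (k - 1) * Bw).mulVec '' Ω n ⊆
        Yclset Acl Bw Ccl Dw Ycl Ω (n + 1) (k - 1) := by
  intro n k hk
  obtain ⟨m, rfl⟩ : ∃ m, k = m + 1 := ⟨k - 1, by omega⟩
  simp only [Nat.add_sub_cancel]
  rintro y ⟨z, hz, w, ⟨e, he, rfl⟩, rfl⟩
  intro v hv
  obtain ⟨a, ⟨e', he', rfl⟩, b, ⟨x, hx, rfl⟩, rfl⟩ := hv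
  have hmem : Dw.mulVec e' + Ccl.mulVec ((Acl ^ m * Bw).mulVec e + x) ∈
      calEy Acl Bw Ccl Dw Ω n (m + 1) := by
    refine Set.add_mem_add ⟨e', ?_, rfl⟩ ⟨(Acl ^ m * Bw).mulVec e + x, ?_, rfl⟩
    · have : n + (m + 1) = n + 1 + m := by omega
      rwa [this]
    · rw [calEx_split]
      exact Set.add_mem_add ⟨e, he, rfl⟩ hx
  have hz' := hz _ hmem
  convert hz' using 1
  simp only [Matrix.mulVec_add, ← Matrix.mulVec_mulVec]
  abel
end

section
/- Fix n ∈ ℕ and suppose Ỹ_n ⊆ Ỹ_{n+1}. If (v, x̂) ∈ Õ_{∞,n} and e ∈ Ω_n, then (v, A_cl x̂ + B_cl v + B_w e) ∈ Õ_{∞,n+1}. -/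
open Matrix Pointwise Filter

lemma calEx_succ' {nx ne : ℕ} (Acl : Matrix (Fin nx) (Fin nx) ℝ)
    (Bw : Matrix (Fin nx) (Fin ne) ℝ) (Ω : ℕ → Set (Fin ne → ℝ)) (n k : ℕ) :
    calEx Acl Bw Ω n (k + 1)
      = calEx Acl Bw Ω (n + 1) k + (Acl ^ k * Bw).mulVec '' Ω n := by
  unfold calEx
  rw [Finset.sum_range_succ']
  congr 1
  apply Finset.sum_congr rfl
  intro i _
  have h1 : k + 1 - 1 - (i + 1) = k - 1 - i := by omega
  have h2 : n + (i + 1) = n + 1 + i := by omega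
  rw [h1, h2]

lemma Hy_succ {nx nv ny : ℕ} (Acl : Matrix (Fin nx) (Fin nx) ℝ)
    (Bcl : Matrix (Fin nx) (Fin nv) ℝ) (Ccl : Matrix (Fin ny) (Fin nx) ℝ)
    (Dcl : Matrix (Fin ny) (Fin nv) ℝ) (hInv : IsUnit (1 - Acl)) (k : ℕ) :
    Hy Acl Bcl Ccl Dcl (k + 1) = Hy Acl Bcl Ccl Dcl k + Ccl * Acl ^ k * Bcl := by
  have hdet : IsUnit (1 - Acl).det := (Matrix.isUnit_iff_isUnit_det _).mp hInv
  have hmul : (1 - Acl)⁻¹ * (1 - Acl) = 1 := Matrix.nonsing_inv_mul _ hdet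
  have key : (1 - Acl)⁻¹ * (1 - Acl ^ (k + 1))
      = (1 - Acl)⁻¹ * (1 - Acl ^ k) + Acl ^ k := by
    have h : (1 : Matrix (Fin nx) (Fin nx) ℝ) - Acl ^ (k + 1)
        = (1 - Acl ^ k) + (1 - Acl) * Acl ^ k := by
      rw [pow_succ']; noncomm_ring
    rw [h, mul_add, ← mul_assoc, hmul, one_mul]
  have key2 : Ccl * (1 - Acl)⁻¹ * (1 - Acl ^ (k + 1))
      = Ccl * (1 - Acl)⁻¹ * (1 - Acl ^ k) + Ccl * Acl ^ k := by
    rw [Matrix.mul_assoc Ccl (1 - Acl)⁻¹ (1 - Acl ^ (k + 1)),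
      Matrix.mul_assoc Ccl (1 - Acl)⁻¹ (1 - Acl ^ k), key, Matrix.mul_add]
  unfold Hy
  rw [key2, Matrix.add_mul, add_assoc]

/-- Fix `n` and suppose `Ỹ_n ⊆ Ỹ_{n+1}`. If `(v, x̂) ∈ Õ_{∞,n}` and
`e ∈ Ω_n`, then `(v, A_cl x̂ + B_cl v + B_w e) ∈ Õ_{∞,n+1}`. -/
theorem stmt_9 {nx nv ne ny : ℕ} (Acl : Matrix (Fin nx) (Fin nx) ℝ)
    (Bcl : Matrix (Fin nx) (Fin nv) ℝ) (Bw : Matrix (Fin nx) (Fin ne) ℝ)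
    (Ccl : Matrix (Fin ny) (Fin nx) ℝ) (Dcl : Matrix (Fin ny) (Fin nv) ℝ)
    (Dw : Matrix (Fin ny) (Fin ne) ℝ) (Ycl : Set (Fin ny → ℝ))
    (Ω : ℕ → Set (Fin ne → ℝ)) (Ytil : ℕ → Set (Fin ny → ℝ))
    (hInv : IsUnit (1 - Acl))
    (n : ℕ) (hYtil : Ytil n ⊆ Ytil (n + 1))
    (v : Fin nv → ℝ) (xhat : Fin nx → ℝ) (e : Fin ne → ℝ)
    (hmem : (v, xhat) ∈ Otilde Acl Bcl Bw Ccl Dcl Dw Ycl Ω Ytil n)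
    (he : e ∈ Ω n) :
    (v, Acl.mulVec xhat + Bcl.mulVec v + Bw.mulVec e) ∈
      Otilde Acl Bcl Bw Ccl Dcl Dw Ycl Ω Ytil (n + 1) := by
  obtain ⟨h1, h2⟩ := hmem
  refine ⟨hYtil h1, fun k => ?_⟩
  intro u hu
  obtain ⟨_, ⟨ω, hω, rfl⟩, _, ⟨s, hs, rfl⟩, rfl⟩ := hu
  -- the element (Acl^k * Bw).mulVec e + s lies in calEx n (k+1)
  have hse : s + (Acl ^ k * Bw).mulVec e ∈ calEx Acl Bw Ω n (k + 1) := by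
    rw [calEx_succ']
    exact Set.add_mem_add hs ⟨e, he, rfl⟩
  have hωmem : ω ∈ Ω (n + (k + 1)) := by
    have : n + 1 + k = n + (k + 1) := by omega
    rwa [this] at hω
  have hEy : Dw.mulVec ω + Ccl.mulVec (s + (Acl ^ k * Bw).mulVec e)
      ∈ calEy Acl Bw Ccl Dw Ω n (k + 1) :=
    Set.add_mem_add ⟨ω, hωmem, rfl⟩ ⟨_, hse, rfl⟩
  have hkey := h2 (k + 1) _ hEy
  -- now rewrite the goal to match hkey
  have hHy := Hy_succ Acl Bcl Ccl Dcl hInv k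
  simp only [Matrix.mulVec_add] at hkey ⊢
  rw [hHy] at hkey
  simp only [Matrix.add_mulVec, ← Matrix.mulVec_mulVec] at hkey ⊢
  rw [pow_succ, ← Matrix.mulVec_mulVec] at hkey
  convert hkey using 1
  abel
end

section
/- Suppose there is n̄ ∈ ℕ such that Ω_{n+1} ⊆ Ω_n for all n ≥ n̄. Then for all n ≥ n̄ and all k ∈ ℕ, Y_{cl,n,k} ⊆ Y_{cl,n+1,k}. -/
open Matrix Pointwise Filter

theorem pDiff_subset_pDiff_right {d : ℕ} {A B B' : Set (Fin d → ℝ)} (h : B ⊆ B') :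
    pDiff A B' ⊆ pDiff A B :=
  fun _ hz v hv => hz v (h hv)

section Monotonicity

variable {nx ne ny : ℕ} (Acl : Matrix (Fin nx) (Fin nx) ℝ) (Bw : Matrix (Fin nx) (Fin ne) ℝ)
  (Ccl : Matrix (Fin ny) (Fin nx) ℝ) (Dw : Matrix (Fin ny) (Fin ne) ℝ) {Ω : ℕ → Set (Fin ne → ℝ)}
  {n k : ℕ}

theorem calEx_succ_subset (h : ∀ i < k, Ω (n + i + 1) ⊆ Ω (n + i)) :
    calEx Acl Bw Ω (n + 1) k ⊆ calEx Acl Bw Ω n k :=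
  Set.finsetSum_subset_finsetSum _ _ _ fun i hi => Set.image_mono <| by
    rw [Nat.add_right_comm]
    exact h i (Finset.mem_range.mp hi)

theorem calEy_succ_subset (h : ∀ i ≤ k, Ω (n + i + 1) ⊆ Ω (n + i)) :
    calEy Acl Bw Ccl Dw Ω (n + 1) k ⊆ calEy Acl Bw Ccl Dw Ω n k := by
  refine Set.add_subset_add (Set.image_mono ?_) (Set.image_mono ?_)
  · rw [Nat.add_right_comm]
    exact h k le_rfl
  · exact calEx_succ_subset Acl Bw fun i hi => h i hi.le

theorem Yclset_subset_Yclset_succ (Ycl : Set (Fin ny → ℝ))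
    (h : ∀ i ≤ k, Ω (n + i + 1) ⊆ Ω (n + i)) :
    Yclset Acl Bw Ccl Dw Ycl Ω n k ⊆ Yclset Acl Bw Ccl Dw Ycl Ω (n + 1) k :=
  pDiff_subset_pDiff_right (calEy_succ_subset Acl Bw Ccl Dw h)

end Monotonicity

/-- If there is `n̄` such that `Ω_{n+1} ⊆ Ω_n` for all `n ≥ n̄`,
then for all `n ≥ n̄` and all `k`, `Y_{cl,n,k} ⊆ Y_{cl,n+1,k}`. -/
theorem stmt_11 {nx ne ny : ℕ} (Acl : Matrix (Fin nx) (Fin nx) ℝ)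
    (Bw : Matrix (Fin nx) (Fin ne) ℝ) (Ccl : Matrix (Fin ny) (Fin nx) ℝ)
    (Dw : Matrix (Fin ny) (Fin ne) ℝ) (Ycl : Set (Fin ny → ℝ))
    (Ω : ℕ → Set (Fin ne → ℝ))
    (nbar : ℕ) (hΩ : ∀ n, nbar ≤ n → Ω (n + 1) ⊆ Ω n) :
    ∀ n, nbar ≤ n → ∀ k : ℕ,
      Yclset Acl Bw Ccl Dw Ycl Ω n k ⊆ Yclset Acl Bw Ccl Dw Ycl Ω (n + 1) k :=
  fun _ hn _ => Yclset_subset_Yclset_succ Acl Bw Ccl Dw Ycl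
    fun i _ => hΩ _ (hn.trans (Nat.le_add_right _ i))
end

section
/- Suppose there is n̄ ∈ ℕ such that for all n ≥ n̄, Ω_{n+1} ⊆ Ω_n and Ỹ_n ⊆ Ỹ_{n+1}. Then for all n ≥ n̄, Õ_{∞,n} ⊆ Õ_{∞,n+1}. -/
open Matrix Pointwise Filter

theorem pDiff_anti {d : ℕ} {A B B' : Set (Fin d → ℝ)} (h : B' ⊆ B) : pDiff A B ⊆ pDiff A B' :=
  fun _ hz v hv => hz v (h hv)

section Shift

variable {nx ne ny : ℕ} (Acl : Matrix (Fin nx) (Fin nx) ℝ) (Bw : Matrix (Fin nx) (Fin ne) ℝ)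
  (Ccl : Matrix (Fin ny) (Fin nx) ℝ) (Dw : Matrix (Fin ny) (Fin ne) ℝ)
  {Ω : ℕ → Set (Fin ne → ℝ)} {m n : ℕ}

theorem calEx_subset_calEx (hΩ : ∀ i, Ω (m + i) ⊆ Ω (n + i)) (k : ℕ) :
    calEx Acl Bw Ω m k ⊆ calEx Acl Bw Ω n k :=
  Set.finsetSum_subset_finsetSum _ _ _ fun i _ => Set.image_mono (hΩ i)

theorem calEy_subset_calEy (hΩ : ∀ i, Ω (m + i) ⊆ Ω (n + i)) (k : ℕ) :
    calEy Acl Bw Ccl Dw Ω m k ⊆ calEy Acl Bw Ccl Dw Ω n k :=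
  Set.add_subset_add (Set.image_mono (hΩ k))
    (Set.image_mono (calEx_subset_calEx Acl Bw hΩ k))

theorem Otilde_subset_Otilde {nv : ℕ} (Bcl : Matrix (Fin nx) (Fin nv) ℝ)
    (Dcl : Matrix (Fin ny) (Fin nv) ℝ) (Ycl : Set (Fin ny → ℝ)) {Ytil : ℕ → Set (Fin ny → ℝ)}
    (hΩ : ∀ i, Ω (m + i) ⊆ Ω (n + i)) (hYtil : Ytil n ⊆ Ytil m) :
    Otilde Acl Bcl Bw Ccl Dcl Dw Ycl Ω Ytil n ⊆ Otilde Acl Bcl Bw Ccl Dcl Dw Ycl Ω Ytil m :=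
  fun _ hp => ⟨hYtil hp.1, fun k => pDiff_anti (calEy_subset_calEy Acl Bw Ccl Dw hΩ k) (hp.2 k)⟩

end Shift

theorem stmt_12_general {nx nv ne ny : ℕ} (Acl : Matrix (Fin nx) (Fin nx) ℝ)
    (Bcl : Matrix (Fin nx) (Fin nv) ℝ) (Bw : Matrix (Fin nx) (Fin ne) ℝ)
    (Ccl : Matrix (Fin ny) (Fin nx) ℝ) (Dcl : Matrix (Fin ny) (Fin nv) ℝ)
    (Dw : Matrix (Fin ny) (Fin ne) ℝ) (Ycl : Set (Fin ny → ℝ))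
    (Ω : ℕ → Set (Fin ne → ℝ)) (Ytil : ℕ → Set (Fin ny → ℝ))
    (nbar : ℕ) (hΩ : ∀ n, nbar ≤ n → Ω (n + 1) ⊆ Ω n)
    (hYtil : ∀ n, nbar ≤ n → Ytil n ⊆ Ytil (n + 1)) :
    ∀ n, nbar ≤ n →
      Otilde Acl Bcl Bw Ccl Dcl Dw Ycl Ω Ytil n ⊆
        Otilde Acl Bcl Bw Ccl Dcl Dw Ycl Ω Ytil (n + 1) := by
  intro n hn
  refine Otilde_subset_Otilde Acl Bw Ccl Dw Bcl Dcl Ycl (fun i => ?_) (hYtil n hn)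
  rw [Nat.add_right_comm]
  exact hΩ (n + i) (hn.trans (Nat.le_add_right n i))

/-- If there is `n̄` such that for all `n ≥ n̄`, `Ω_{n+1} ⊆ Ω_n` and
`Ỹ_n ⊆ Ỹ_{n+1}`, then `Õ_{∞,n} ⊆ Õ_{∞,n+1}` for all `n ≥ n̄`. -/
theorem stmt_12 {nx nv ne ny : ℕ} (Acl : Matrix (Fin nx) (Fin nx) ℝ)
    (Bcl : Matrix (Fin nx) (Fin nv) ℝ) (Bw : Matrix (Fin nx) (Fin ne) ℝ)
    (Ccl : Matrix (Fin ny) (Fin nx) ℝ) (Dcl : Matrix (Fin ny) (Fin nv) ℝ)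
    (Dw : Matrix (Fin ny) (Fin ne) ℝ) (Ycl : Set (Fin ny → ℝ))
    (Ω : ℕ → Set (Fin ne → ℝ)) (Ytil : ℕ → Set (Fin ny → ℝ))
    (hInv : IsUnit (1 - Acl))
    (nbar : ℕ) (hΩ : ∀ n, nbar ≤ n → Ω (n + 1) ⊆ Ω n)
    (hYtil : ∀ n, nbar ≤ n → Ytil n ⊆ Ytil (n + 1)) :
    ∀ n, nbar ≤ n →
      Otilde Acl Bcl Bw Ccl Dcl Dw Ycl Ω Ytil n ⊆
        Otilde Acl Bcl Bw Ccl Dcl Dw Ycl Ω Ytil (n + 1) :=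
  stmt_12_general Acl Bcl Bw Ccl Dcl Dw Ycl Ω Ytil nbar hΩ hYtil
end

section
/- Fix n ∈ ℕ. Suppose: (i) A_cl^k → 0 as k → ∞ (A_cl is Schur); (ii) the pair (C_cl, A_cl) is observable, i.e., for every x ∈ ℝ^{nx}, if C_cl A_cl^k x = 0 for all k ∈ ℕ then x = 0; (iii) Y_cl is compact and each Ω_i is compact; (iv) Ỹ_n is nonempty and there exists ε_n > 0 such that Ỹ_n ⊕ ε_n·𝔹 ⊆ Y_{cl,n,k} for every k ∈ ℕ, where 𝔹 is the closed Euclidean unit ball of ℝ^{ny}. Then there exists k*(n) ∈ ℕ such that Õ_{∞,n} = {(v, x̂) ∈ ℝ^{nv} × ℝ^{nx} : H^y_∞ v ∈ Ỹ_n and H^y_k v + C_cl A_cl^k x̂ ∈ Y_{cl,n,k} for all k = 0, 1, …, k*(n)}; i.e., Õ_{∞,n} is finitely determined. -/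
open Matrix Pointwise Filter

/-- The closed Euclidean unit ball of `ℝ^d` (viewed as a set of plain vectors). -/
def euclUnitBall (d : ℕ) : Set (Fin d → ℝ) :=
  {y | ‖(EuclideanSpace.equiv (Fin d) ℝ).symm y‖ ≤ 1}

/-! The substitution `z = x̂ − (I − A_cl)⁻¹ B_cl v` turns the `k`-th constraint into
`H^y_∞ v + C_cl A_cl^k z ∈ Y_{cl,n,k}`.

If some `Ω_{n+j}` is empty, then `ℰʸ(n,k) = ∅` and `Y_{cl,n,k}` is the whole space for `k ≥ j`.
Otherwise every `Y_{cl,n,k}` lies in a translate of `Y_cl`, so it is bounded. Since the kernels of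
the maps `C_cl A_cl^k` have trivial intersection and subspaces of a finite-dimensional space satisfy
the descending chain condition, finitely many of them already have trivial intersection; the
corresponding finitely many constraints, together with `H^y_∞ v ∈ Ỹ_n ⊆ Y_{cl,n,k}`, confine `z` to
a bounded set. On that set `C_cl A_cl^k z → 0` uniformly, so for large `k` it lies in `ε_n 𝔹`, and
`Ỹ_n ⊕ ε_n 𝔹 ⊆ Y_{cl,n,k}` gives the remaining constraints for free. -/

open Bornology Set

section FiniteDetermination

variable {𝕜 E F : Type*} [NontriviallyNormedField 𝕜]
  [NormedAddCommGroup E] [NormedSpace 𝕜 E] [NormedAddCommGroup F] [NormedSpace 𝕜 F]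

theorem exists_finset_antilipschitzWith_pi [CompleteSpace 𝕜] [FiniteDimensional 𝕜 E]
    {ι : Type*} (L : ι → E →L[𝕜] F) (hL : ∀ z, (∀ i, L i z = 0) → z = 0) :
    ∃ (t : Finset ι) (K : NNReal), AntilipschitzWith K fun z (i : t) => L i z := by
  obtain ⟨t, ht⟩ := Finset.exists_inf_eq_iInf fun i => LinearMap.ker (L i : E →ₗ[𝕜] F)
  have hker : LinearMap.ker (LinearMap.pi fun i : t => (L i : E →ₗ[𝕜] F)) = ⊥ := by
    refine eq_bot_iff.mpr fun z hz => ?_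
    have hzt : z ∈ t.inf fun i => LinearMap.ker (L i : E →ₗ[𝕜] F) :=
      Submodule.mem_finsetInf.mpr fun i hi => congr_fun hz ⟨i, hi⟩
    rw [ht, Submodule.mem_iInf] at hzt
    exact hL z hzt
  obtain ⟨K, -, hK⟩ := LinearMap.exists_antilipschitzWith _ hker
  exact ⟨t, K, hK⟩

theorem eventually_forall_mem_of_tendsto_zero {α : Type*} {l : Filter α} {L : α → E →L[𝕜] F}
    (hL : Tendsto L l (nhds 0)) {Z : Set E} (hZ : IsBounded Z) {U : Set F} (hU : U ∈ nhds 0) :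
    ∀ᶠ a in l, ∀ z ∈ Z, L a z ∈ U := by
  obtain ⟨r, hr, hrU⟩ := Metric.mem_nhds_iff.mp hU
  obtain ⟨R, hR, hZR⟩ := hZ.exists_pos_norm_le
  have hsmall : ∀ᶠ a in l, ‖L a‖ < r / R :=
    (tendsto_zero_iff_norm_tendsto_zero.mp hL).eventually (gt_mem_nhds (div_pos hr hR))
  filter_upwards [hsmall] with a ha z hz
  apply hrU
  rw [mem_ball_zero_iff]
  calc ‖L a z‖ ≤ ‖L a‖ * ‖z‖ := (L a).le_opNorm z
    _ ≤ ‖L a‖ * R := by gcongr; exact hZR z hz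
    _ < r / R * R := by gcongr
    _ = r := div_mul_cancel₀ r hR.ne'

theorem exists_forall_add_mem_of_forall_le [CompleteSpace 𝕜] [FiniteDimensional 𝕜 E]
    {L : ℕ → E →L[𝕜] F} (hL : Tendsto L atTop (nhds 0)) (hobs : ∀ z, (∀ k, L k z = 0) → z = 0)
    {S U : Set F} {Y : ℕ → Set F} (hU : U ∈ nhds 0) (hY : ∀ k, IsBounded (Y k))
    (hSUY : ∀ k, S + U ⊆ Y k) :
    ∃ K, ∀ w ∈ S, ∀ z, (∀ k ≤ K, w + L k z ∈ Y k) → ∀ k, w + L k z ∈ Y k := by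
  obtain ⟨t, C, hC⟩ := exists_finset_antilipschitzWith_pi L hobs
  have hSY : ∀ k, ∀ w ∈ S, w ∈ Y k := fun k w hw =>
    hSUY k (by simpa using add_mem_add hw (mem_of_mem_nhds hU))
  set Z := (fun z (i : t) => L i z) ⁻¹' univ.pi fun i => Y i - Y i
  have hZ : IsBounded Z :=
    hC.isBounded_preimage (isBounded_pi.mpr (.inr fun i => (hY i).sub (hY i)))
  obtain ⟨K, hK⟩ := eventually_atTop.mp (eventually_forall_mem_of_tendsto_zero hL hZ hU)
  refine ⟨max (t.sup id) K, fun w hw z hz k => ?_⟩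
  rcases le_or_gt k (max (t.sup id) K) with hk | hk
  · exact hz k hk
  have hzZ : z ∈ Z := fun i _ =>
    ⟨w + L i z, hz i (le_max_of_le_left (t.le_sup (f := id) i.2)), w, hSY i w hw,
      add_sub_cancel_left w _⟩
  exact hSUY k (add_mem_add hw (hK k (max_lt_iff.mp hk).2.le z hzZ))

end FiniteDetermination

theorem tendsto_toContinuousLinearMap_toLin' {𝕜 m p α : Type*} [NontriviallyNormedField 𝕜]
    [CompleteSpace 𝕜] [Fintype m] [Fintype p] [DecidableEq p] {l : Filter α}
    {M : α → Matrix m p 𝕜} (hM : Tendsto M l (nhds 0)) :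
    Tendsto (fun a => LinearMap.toContinuousLinearMap (Matrix.toLin' (M a))) l (nhds 0) := by
  have hcont := (LinearMap.toContinuousLinearMap.toLinearMap ∘ₗ
    (Matrix.toLin' : Matrix m p 𝕜 ≃ₗ[𝕜] _).toLinearMap).continuous_of_finiteDimensional
  have h := (hcont.tendsto 0).comp hM
  rw [map_zero] at h
  exact h

theorem Hy_eq_Hyinf_sub {nx nv ny : ℕ} {Acl : Matrix (Fin nx) (Fin nx) ℝ}
    (Bcl : Matrix (Fin nx) (Fin nv) ℝ) (Ccl : Matrix (Fin ny) (Fin nx) ℝ)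
    (Dcl : Matrix (Fin ny) (Fin nv) ℝ) (hInv : IsUnit (1 - Acl)) (k : ℕ) :
    Hy Acl Bcl Ccl Dcl k = Hyinf Acl Bcl Ccl Dcl - Ccl * Acl ^ k * ((1 - Acl)⁻¹ * Bcl) := by
  have hcomm : Commute (Acl ^ k) (1 - Acl)⁻¹ := by
    rw [← hInv.unit_spec, ← Matrix.coe_units_inv]
    exact ((Commute.one_right _).sub_right ((Commute.refl Acl).pow_left k)).units_inv_right
  rw [Hy, Hyinf, Matrix.mul_assoc Ccl, mul_sub, mul_one, ← hcomm.eq, Matrix.mul_sub,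
    Matrix.sub_mul, ← Matrix.mul_assoc Ccl, Matrix.mul_assoc (Ccl * _)]
  abel

theorem Hy_mulVec_add_mulVec {nx nv ny : ℕ} {Acl : Matrix (Fin nx) (Fin nx) ℝ}
    (Bcl : Matrix (Fin nx) (Fin nv) ℝ) (Ccl : Matrix (Fin ny) (Fin nx) ℝ)
    (Dcl : Matrix (Fin ny) (Fin nv) ℝ) (hInv : IsUnit (1 - Acl)) (k : ℕ)
    (v : Fin nv → ℝ) (xh : Fin nx → ℝ) :
    Hy Acl Bcl Ccl Dcl k *ᵥ v + (Ccl * Acl ^ k) *ᵥ xh =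
      Hyinf Acl Bcl Ccl Dcl *ᵥ v + (Ccl * Acl ^ k) *ᵥ (xh - ((1 - Acl)⁻¹ * Bcl) *ᵥ v) := by
  rw [Hy_eq_Hyinf_sub Bcl Ccl Dcl hInv, sub_mulVec, mulVec_sub, ← mulVec_mulVec]
  abel

theorem pDiff_empty {d : ℕ} (A : Set (Fin d → ℝ)) : pDiff A ∅ = univ :=
  eq_univ_of_forall fun _ _ hv => absurd hv (notMem_empty _)

theorem Bornology.IsBounded.pDiff {d : ℕ} {A B : Set (Fin d → ℝ)} (hA : IsBounded A)
    (hB : B.Nonempty) : IsBounded (pDiff A B) := by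
  obtain ⟨e, he⟩ := hB
  refine (hA.sub (isBounded_singleton (x := e))).subset fun z hz => ?_
  exact ⟨z + e, hz e he, e, rfl, add_sub_cancel_right z e⟩

theorem smul_euclUnitBall_mem_nhds {d : ℕ} {ε : ℝ} (hε : 0 < ε) :
    ε • euclUnitBall d ∈ nhds 0 := by
  rw [set_smul_mem_nhds_zero_iff hε.ne']
  have h := (EuclideanSpace.equiv (Fin d) ℝ).symm.continuous.tendsto 0
  rw [map_zero] at h
  exact mem_of_superset (h (Metric.closedBall_mem_nhds 0 one_pos)) fun y hy => by
    simpa [euclUnitBall] using hy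

section Disturbance

variable {nx ne ny : ℕ} (Acl : Matrix (Fin nx) (Fin nx) ℝ) (Bw : Matrix (Fin nx) (Fin ne) ℝ)
  (Ccl : Matrix (Fin ny) (Fin nx) ℝ) (Dw : Matrix (Fin ny) (Fin ne) ℝ) {Ω : ℕ → Set (Fin ne → ℝ)}
  {n : ℕ}

theorem calEx_eq_empty {j k : ℕ} (hj : Ω (n + j) = ∅) (hjk : j < k) :
    calEx Acl Bw Ω n k = ∅ := by
  refine eq_empty_of_forall_notMem fun x hx => ?_
  obtain ⟨g, hg, -⟩ := (Set.mem_finsetSum _ _ _).mp hx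
  obtain ⟨e, he, -⟩ := hg (Finset.mem_range.mpr hjk)
  exact (hj ▸ he : e ∈ (∅ : Set _))

theorem calEy_eq_empty {j k : ℕ} (hj : Ω (n + j) = ∅) (hjk : j ≤ k) :
    calEy Acl Bw Ccl Dw Ω n k = ∅ := by
  rcases hjk.eq_or_lt with rfl | hjk
  · simp [calEy, hj]
  · simp [calEy, calEx_eq_empty Acl Bw hj hjk]

theorem Yclset_eq_univ (Ycl : Set (Fin ny → ℝ)) {j k : ℕ} (hj : Ω (n + j) = ∅) (hjk : j ≤ k) :
    Yclset Acl Bw Ccl Dw Ycl Ω n k = univ := by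
  rw [Yclset, calEy_eq_empty Acl Bw Ccl Dw hj hjk, pDiff_empty]

theorem calEy_nonempty (hΩ : ∀ i, (Ω (n + i)).Nonempty) (k : ℕ) :
    (calEy Acl Bw Ccl Dw Ω n k).Nonempty := by
  have hEx : (calEx Acl Bw Ω n k).Nonempty := by
    choose e he using hΩ
    exact ⟨_, Set.finsetSum_mem_finsetSum _ _ _ fun i _ => mem_image_of_mem _ (he i)⟩
  exact ((hΩ k).image _).add (hEx.image _)

end Disturbance

theorem stmt_14_general {nx nv ne ny : ℕ} (Acl : Matrix (Fin nx) (Fin nx) ℝ)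
    (Bcl : Matrix (Fin nx) (Fin nv) ℝ) (Bw : Matrix (Fin nx) (Fin ne) ℝ)
    (Ccl : Matrix (Fin ny) (Fin nx) ℝ) (Dcl : Matrix (Fin ny) (Fin nv) ℝ)
    (Dw : Matrix (Fin ny) (Fin ne) ℝ) (Ycl : Set (Fin ny → ℝ))
    (Ω : ℕ → Set (Fin ne → ℝ)) (Ytil : ℕ → Set (Fin ny → ℝ))
    (hInv : IsUnit (1 - Acl))
    (n : ℕ)
    (hSchur : Filter.Tendsto (fun k : ℕ => Acl ^ k) Filter.atTop (nhds 0))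
    (hObs : ∀ x : Fin nx → ℝ, (∀ k : ℕ, (Ccl * Acl ^ k).mulVec x = 0) → x = 0)
    (hYcl : IsCompact Ycl)
    (heps : ∃ εn : ℝ, 0 < εn ∧ ∀ k : ℕ,
      Ytil n + εn • euclUnitBall ny ⊆ Yclset Acl Bw Ccl Dw Ycl Ω n k) :
    ∃ kstar : ℕ,
      Otilde Acl Bcl Bw Ccl Dcl Dw Ycl Ω Ytil n =
        {p : (Fin nv → ℝ) × (Fin nx → ℝ) |
          (Hyinf Acl Bcl Ccl Dcl).mulVec p.1 ∈ Ytil n ∧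
          ∀ k : ℕ, k ≤ kstar →
            (Hy Acl Bcl Ccl Dcl k).mulVec p.1 + (Ccl * Acl ^ k).mulVec p.2 ∈
              Yclset Acl Bw Ccl Dw Ycl Ω n k} := by
  suffices h : ∃ K, ∀ p : (Fin nv → ℝ) × (Fin nx → ℝ), Hyinf Acl Bcl Ccl Dcl *ᵥ p.1 ∈ Ytil n →
      (∀ k ≤ K, Hy Acl Bcl Ccl Dcl k *ᵥ p.1 + (Ccl * Acl ^ k) *ᵥ p.2 ∈
        Yclset Acl Bw Ccl Dw Ycl Ω n k) →
      ∀ k, Hy Acl Bcl Ccl Dcl k *ᵥ p.1 + (Ccl * Acl ^ k) *ᵥ p.2 ∈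
        Yclset Acl Bw Ccl Dw Ycl Ω n k by
    obtain ⟨K, hK⟩ := h
    exact ⟨K, Set.ext fun p => ⟨fun hp => ⟨hp.1, fun k _ => hp.2 k⟩,
      fun hp => ⟨hp.1, hK p hp.1 hp.2⟩⟩⟩
  by_cases hΩ : ∃ j, Ω (n + j) = ∅
  · obtain ⟨j, hj⟩ := hΩ
    refine ⟨j, fun p _ hp k => ?_⟩
    rcases le_or_gt k j with hk | hk
    · exact hp k hk
    · exact (Yclset_eq_univ Acl Bw Ccl Dw Ycl hj hk.le).symm ▸ mem_univ _
  · simp only [not_exists, ← nonempty_iff_ne_empty] at hΩ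
    obtain ⟨ε, hε, hsub⟩ := heps
    have hCA : Tendsto (fun k => Ccl * Acl ^ k) atTop (nhds 0) := by
      have hmul : Continuous fun M : Matrix (Fin nx) (Fin nx) ℝ => Ccl * M :=
        continuous_const.matrix_mul continuous_id
      simpa only [Matrix.mul_zero, Function.comp_def] using (hmul.tendsto 0).comp hSchur
    have hobs : ∀ z, (∀ k, LinearMap.toContinuousLinearMap (toLin' (Ccl * Acl ^ k)) z = 0) →
        z = 0 := fun z hz => hObs z fun k => hz k
    obtain ⟨K, hK⟩ := exists_forall_add_mem_of_forall_le (tendsto_toContinuousLinearMap_toLin' hCA)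
      hobs (smul_euclUnitBall_mem_nhds hε)
      (fun k => hYcl.isBounded.pDiff (calEy_nonempty Acl Bw Ccl Dw hΩ k)) hsub
    refine ⟨K, fun p hp hpK k => ?_⟩
    simp only [Hy_mulVec_add_mulVec Bcl Ccl Dcl hInv] at hpK ⊢
    exact hK _ hp _ hpK k

/-- Finite determination of `Õ_{∞,n}`. Suppose `A_cl^k → 0`
(Schur), `(C_cl, A_cl)` is observable, `Y_cl` is compact and each `Ω_i` is compact,
`Ỹ_n` is nonempty, and there is `ε_n > 0` with `Ỹ_n ⊕ ε_n·𝔹 ⊆ Y_{cl,n,k}` for all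
`k`, where `𝔹` is the closed Euclidean unit ball. Then there exists `k*(n)` such
that `Õ_{∞,n}` is cut out by the inequalities with `k ≤ k*(n)` only. -/
theorem stmt_14 {nx nv ne ny : ℕ} (Acl : Matrix (Fin nx) (Fin nx) ℝ)
    (Bcl : Matrix (Fin nx) (Fin nv) ℝ) (Bw : Matrix (Fin nx) (Fin ne) ℝ)
    (Ccl : Matrix (Fin ny) (Fin nx) ℝ) (Dcl : Matrix (Fin ny) (Fin nv) ℝ)
    (Dw : Matrix (Fin ny) (Fin ne) ℝ) (Ycl : Set (Fin ny → ℝ))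
    (Ω : ℕ → Set (Fin ne → ℝ)) (Ytil : ℕ → Set (Fin ny → ℝ))
    (hInv : IsUnit (1 - Acl))
    (n : ℕ)
    (hSchur : Filter.Tendsto (fun k : ℕ => Acl ^ k) Filter.atTop (nhds 0))
    (hObs : ∀ x : Fin nx → ℝ, (∀ k : ℕ, (Ccl * Acl ^ k).mulVec x = 0) → x = 0)
    (hYcl : IsCompact Ycl) (hΩ : ∀ i : ℕ, IsCompact (Ω i))
    (hYtilne : (Ytil n).Nonempty)
    (heps : ∃ εn : ℝ, 0 < εn ∧ ∀ k : ℕ,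
      Ytil n + εn • euclUnitBall ny ⊆ Yclset Acl Bw Ccl Dw Ycl Ω n k) :
    ∃ kstar : ℕ,
      Otilde Acl Bcl Bw Ccl Dcl Dw Ycl Ω Ytil n =
        {p : (Fin nv → ℝ) × (Fin nx → ℝ) |
          (Hyinf Acl Bcl Ccl Dcl).mulVec p.1 ∈ Ytil n ∧
          ∀ k : ℕ, k ≤ kstar →
            (Hy Acl Bcl Ccl Dcl k).mulVec p.1 + (Ccl * Acl ^ k).mulVec p.2 ∈
              Yclset Acl Bw Ccl Dw Ycl Ω n k} :=
  stmt_14_general Acl Bcl Bw Ccl Dcl Dw Ycl Ω Ytil hInv n hSchur hObs hYcl heps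
end

section
/- Let A ∈ ℝ^{n×n} be such that there exist M ≥ 1 and θ ∈ (0,1) with ‖Aᵏ‖ ≤ M θᵏ for all k ∈ ℕ (operator norm induced by the Euclidean norm), let B ∈ ℝ^{n×m}, and let Ω ⊆ ℝᵐ be a nonempty compact set. Define F̄ = {Σ_{i=0}^∞ Aⁱ B ε_i : ε : ℕ → ℝᵐ, ε_i ∈ Ω for all i}, noting each such series converges absolutely. Then: (i) F̄ is a nonempty compact subset of ℝⁿ; and (ii) A·F̄ ⊕ B·Ω ⊆ F̄, where A·F̄ = {A x : x ∈ F̄}, B·Ω = {B ε : ε ∈ Ω}, and ⊕ is the Minkowski sum. -/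
/-!
The matrices `Aⁱ B` have geometrically decaying operator norms, so by the Weierstrass M-test
`ε ↦ ∑' i, Aⁱ B εᵢ` is continuous on the compact product `Ωᴺ`, and `F̄` is compact as its image.
Invariance is a shift of the input sequence: `A (∑' i, Aⁱ B εᵢ) + B ω` is the series of the
sequence `ω, ε₀, ε₁, …`.
-/

open Matrix Pointwise

section SeriesOfOperators

variable {𝕜 E F : Type*} [NontriviallyNormedField 𝕜] [NormedAddCommGroup E] [NormedSpace 𝕜 E]
  [NormedAddCommGroup F] [NormedSpace 𝕜 F] [CompleteSpace F]

theorem isCompact_setOf_tsum_apply {T : ℕ → E →L[𝕜] F} (hT : Summable fun i => ‖T i‖)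
    {Ω : Set E} (hΩ : IsCompact Ω) :
    IsCompact {x | ∃ ε : ℕ → E, (∀ i, ε i ∈ Ω) ∧ x = ∑' i, T i (ε i)} := by
  obtain ⟨R, hR⟩ := hΩ.isBounded.exists_norm_le
  have hcont : ContinuousOn (fun ε : ℕ → E => ∑' i, T i (ε i)) (Set.univ.pi fun _ => Ω) :=
    continuousOn_tsum (fun i => ((T i).continuous.comp (continuous_apply i)).continuousOn)
      (hT.mul_right R) fun i ε hε => (T i).le_opNorm_of_le (hR _ (hε i (Set.mem_univ i)))
  convert (isCompact_univ_pi fun _ => hΩ).image_of_continuousOn hcont using 1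
  ext x
  simp only [Set.mem_ofPred_eq, Set.mem_image, Set.mem_univ_pi, eq_comm]

end SeriesOfOperators

section MatrixSeries

variable {𝕜 ι κ : Type*} [RCLike 𝕜] [Fintype ι] [DecidableEq ι] [Fintype κ]

theorem exists_norm_mulVecLin_le_mul_norm_toEuclideanCLM :
    ∃ c : ℝ, ∀ A : Matrix ι ι 𝕜,
      ‖LinearMap.toContinuousLinearMap A.mulVecLin‖ ≤
        c * ‖toEuclideanCLM (𝕜 := 𝕜) (n := ι) A‖ := by
  let e := (PiLp.continuousLinearEquiv 2 𝕜 fun _ : ι => 𝕜).toContinuousLinearMap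
  let e' := (PiLp.continuousLinearEquiv 2 𝕜 fun _ : ι => 𝕜).symm.toContinuousLinearMap
  refine ⟨‖e‖ * ‖e'‖, fun A => ?_⟩
  let T := toEuclideanCLM (𝕜 := 𝕜) (n := ι) A
  have hconj : LinearMap.toContinuousLinearMap A.mulVecLin = e ∘L T ∘L e' := by
    ext x; rfl
  rw [hconj]
  calc _ ≤ ‖e‖ * (‖T‖ * ‖e'‖) := (e.opNorm_comp_le _).trans (by gcongr; exact T.opNorm_comp_le _)
    _ = _ := by ring

theorem summable_norm_mulVecLin_pow_mul {A : Matrix ι ι 𝕜}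
    (hA : Summable fun k => ‖toEuclideanCLM (𝕜 := 𝕜) (n := ι) (A ^ k)‖) (B : Matrix ι κ 𝕜) :
    Summable fun k => ‖LinearMap.toContinuousLinearMap (A ^ k * B).mulVecLin‖ := by
  obtain ⟨c, hc⟩ := exists_norm_mulVecLin_le_mul_norm_toEuclideanCLM (𝕜 := 𝕜) (ι := ι)
  refine .of_nonneg_of_le (fun _ => norm_nonneg _) (fun k => ?_)
    ((hA.mul_left c).mul_right ‖LinearMap.toContinuousLinearMap B.mulVecLin‖)
  have hcomp : LinearMap.toContinuousLinearMap (A ^ k * B).mulVecLin =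
      LinearMap.toContinuousLinearMap (A ^ k).mulVecLin ∘L
        LinearMap.toContinuousLinearMap B.mulVecLin := by
    ext v; simp [mulVec_mulVec]
  rw [hcomp]
  exact (ContinuousLinearMap.opNorm_comp_le _ _).trans (by gcongr; exact hc _)

theorem mulVec_tsum_add_mulVec_eq_tsum (A : Matrix ι ι 𝕜) (B : Matrix ι κ 𝕜) {ε : ℕ → κ → 𝕜}
    (hε : Summable fun i => (A ^ i * B) *ᵥ ε i) (ω : κ → 𝕜) :
    A *ᵥ (∑' i, (A ^ i * B) *ᵥ ε i) + B *ᵥ ω =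
      ∑' i, (A ^ i * B) *ᵥ (Nat.casesOn i ω ε : κ → 𝕜) := by
  have hshift (i : ℕ) : (A ^ (i + 1) * B) *ᵥ ε i = A *ᵥ ((A ^ i * B) *ᵥ ε i) := by
    rw [mulVec_mulVec, pow_succ', Matrix.mul_assoc]
  have hsum : Summable fun i => A *ᵥ ((A ^ i * B) *ᵥ ε i) :=
    hε.mapL (LinearMap.toContinuousLinearMap A.mulVecLin)
  rw [tsum_eq_zero_add' (f := fun i => (A ^ i * B) *ᵥ (Nat.casesOn i ω ε : κ → 𝕜))
    (by simpa only [hshift] using hsum)]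
  simp only [hshift, pow_zero, Matrix.one_mul]
  rw [add_comm]
  exact congrArg (B *ᵥ ω + ·) ((LinearMap.toContinuousLinearMap A.mulVecLin).map_tsum hε)

end MatrixSeries

theorem stmt_18_general {n m : ℕ} (A : Matrix (Fin n) (Fin n) ℝ) (B : Matrix (Fin n) (Fin m) ℝ)
    (M θ : ℝ) (hθ : θ ∈ Set.Ioo (0 : ℝ) 1)
    (hA : ∀ k : ℕ, ‖Matrix.toEuclideanCLM (𝕜 := ℝ) (A ^ k)‖ ≤ M * θ ^ k)
    (Ω : Set (Fin m → ℝ)) (hΩne : Ω.Nonempty) (hΩc : IsCompact Ω)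
    (Fbar : Set (Fin n → ℝ))
    (hFbar : Fbar = {x | ∃ ε : ℕ → Fin m → ℝ, (∀ i : ℕ, ε i ∈ Ω) ∧
      x = ∑' i : ℕ, (A ^ i * B).mulVec (ε i)}) :
    (Fbar.Nonempty ∧ IsCompact Fbar) ∧
      A.mulVec '' Fbar + B.mulVec '' Ω ⊆ Fbar := by
  have hT := summable_norm_mulVecLin_pow_mul (.of_nonneg_of_le (fun _ => norm_nonneg _) hA
    ((summable_geometric_of_lt_one hθ.1.le hθ.2).mul_left M)) B
  obtain ⟨R, hR⟩ := hΩc.isBounded.exists_norm_le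
  subst hFbar
  obtain ⟨ω₀, hω₀⟩ := hΩne
  refine ⟨⟨⟨_, fun _ => ω₀, fun _ => hω₀, rfl⟩, isCompact_setOf_tsum_apply hT hΩc⟩, ?_⟩
  rintro _ ⟨_, ⟨_, ⟨ε, hε, rfl⟩, rfl⟩, _, ⟨ω, hω, rfl⟩, rfl⟩
  refine ⟨fun i => Nat.casesOn i ω ε, fun i => i.casesOn hω hε,
    mulVec_tsum_add_mulVec_eq_tsum A B ?_ ω⟩
  exact .of_norm_bounded (hT.mul_right R) fun i =>
    (LinearMap.toContinuousLinearMap (A ^ i * B).mulVecLin).le_opNorm_of_le (hR _ (hε i))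

/-- Let `A ∈ ℝ^{n×n}` with `‖Aᵏ‖ ≤ M θᵏ` (`M ≥ 1`, `θ ∈ (0,1)`,
Euclidean operator norm via `Matrix.toEuclideanCLM`), `B ∈ ℝ^{n×m}`, and `Ω ⊆ ℝᵐ`
nonempty compact. With `F̄ = {Σ_{i=0}^∞ Aⁱ B ε_i : ε_i ∈ Ω ∀i}` (written with `∑'`;
the series converge absolutely): (i) `F̄` is nonempty and compact; and
(ii) `A·F̄ ⊕ B·Ω ⊆ F̄`. -/
theorem stmt_18 {n m : ℕ} (A : Matrix (Fin n) (Fin n) ℝ) (B : Matrix (Fin n) (Fin m) ℝ)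
    (M θ : ℝ) (hM : 1 ≤ M) (hθ : θ ∈ Set.Ioo (0 : ℝ) 1)
    (hA : ∀ k : ℕ, ‖Matrix.toEuclideanCLM (𝕜 := ℝ) (A ^ k)‖ ≤ M * θ ^ k)
    (Ω : Set (Fin m → ℝ)) (hΩne : Ω.Nonempty) (hΩc : IsCompact Ω)
    (Fbar : Set (Fin n → ℝ))
    (hFbar : Fbar = {x | ∃ ε : ℕ → Fin m → ℝ, (∀ i : ℕ, ε i ∈ Ω) ∧
      x = ∑' i : ℕ, (A ^ i * B).mulVec (ε i)}) :
    (Fbar.Nonempty ∧ IsCompact Fbar) ∧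
      A.mulVec '' Fbar + B.mulVec '' Ω ⊆ Fbar :=
  stmt_18_general A B M θ hθ hA Ω hΩne hΩc Fbar hFbar
end

section
/- Let A ∈ ℝ^{n×n} be such that there exist M ≥ 1 and θ ∈ (0,1) with ‖Aᵏ‖ ≤ M θᵏ for all k ∈ ℕ (operator norm induced by the Euclidean norm), let B ∈ ℝ^{n×m}, and let Ω ⊆ ℝᵐ be a nonempty compact set. Define F̄ = {Σ_{i=0}^∞ Aⁱ B ε_i : ε : ℕ → ℝᵐ, ε_i ∈ Ω for all i}. Let (x_k) be a sequence in ℝⁿ satisfying x_{k+1} = A x_k + u_k + B e_k, where (u_k) is a sequence in ℝⁿ with u_k → 0 and e_k ∈ Ω for all k. Then dist(x_k, F̄) → 0 as k → ∞, where dist denotes the Euclidean distance from a point to a set. -/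
/-!
The set `F̄` is forward invariant under the noise-free dynamics: if `y = ∑ Aⁱ B εᵢ` and
`w ∈ Ω`, then `A y + B w = ∑ Aⁱ B ε'ᵢ` with `ε' = (w, ε₀, ε₁, …)`. Hence the shadow trajectory
`y_{k+1} = A y_k + B e_k`, started anywhere in the set, never leaves it, and the error
`z_k = x_k - y_k` obeys `z_{k+1} = A z_k + u_k`, so `z_k = Aᵏ z₀ + ∑_{i<k} Aⁱ u_{k-1-i}`.
As `∑ ‖Aᵏ‖ < ∞` and `u_k → 0`, dominated convergence for series (Tannery's theorem) gives
`z_k → 0`, and `dist(x_k, F̄) ≤ ‖z_k‖`.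
-/

open Matrix Filter Topology Finset

section LinearRecurrence

variable {𝕜 E : Type*} [NontriviallyNormedField 𝕜] [NormedAddCommGroup E] [NormedSpace 𝕜 E]
  {T : E →L[𝕜] E}

lemma eq_pow_apply_add_sum_of_recurrence {z u : ℕ → E} (hz : ∀ k, z (k + 1) = T (z k) + u k)
    (k : ℕ) : z k = (T ^ k) (z 0) + ∑ i ∈ range k, (T ^ i) (u (k - 1 - i)) := by
  induction k with
  | zero => simp
  | succ k ih =>
    rw [hz, ih, sum_range_succ', map_add, map_sum]
    simp only [pow_succ', mul_apply_eq_comp, pow_zero, one_apply_eq_self, Nat.add_sub_cancel,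
      Nat.sub_zero, Nat.sub_sub, Nat.add_comm 1]
    abel

theorem tendsto_sum_range_pow_apply_of_tendsto_zero [CompleteSpace E]
    (hT : Summable fun k => ‖T ^ k‖) {u : ℕ → E} (hu : Tendsto u atTop (𝓝 0)) :
    Tendsto (fun k => ∑ i ∈ range k, (T ^ i) (u (k - 1 - i))) atTop (𝓝 0) := by
  obtain ⟨C, hC⟩ := hu.norm.bddAbove_range
  have hC : ∀ j, ‖u j‖ ≤ C := fun j => hC ⟨j, rfl⟩
  set f : ℕ → ℕ → E := fun k i => if i < k then (T ^ i) (u (k - 1 - i)) else 0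
  have hf : ∀ k, ∑' i, f k i = ∑ i ∈ range k, (T ^ i) (u (k - 1 - i)) := fun k => by
    rw [tsum_eq_sum (s := range k) fun i hi => if_neg (by simpa using hi)]
    exact sum_congr rfl fun i hi => if_pos (mem_range.mp hi)
  simp only [← hf]
  rw [← tsum_zero]
  refine tendsto_tsum_of_dominated_convergence (bound := fun i => ‖T ^ i‖ * C)
    (hT.mul_right C) (fun i => ?_) (Eventually.of_forall fun k i => ?_)
  · have hlim : Tendsto (fun k => (T ^ i) (u (k - 1 - i))) atTop (𝓝 0) := by
      simpa only [map_zero, Function.comp_def] using ((T ^ i).continuous.tendsto 0).comp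
        (hu.comp ((tendsto_sub_atTop_nat i).comp (tendsto_sub_atTop_nat 1)))
    refine hlim.congr' ?_
    filter_upwards [eventually_gt_atTop i] with k hk
    simp [f, hk]
  · by_cases hk : i < k
    · simpa [f, hk] using (T ^ i).le_opNorm_of_le (hC _)
    · simpa [f, hk] using mul_nonneg (norm_nonneg (T ^ i)) ((norm_nonneg _).trans (hC 0))

theorem tendsto_zero_of_recurrence [CompleteSpace E] (hT : Summable fun k => ‖T ^ k‖) {z u : ℕ → E}
    (hu : Tendsto u atTop (𝓝 0)) (hz : ∀ k, z (k + 1) = T (z k) + u k) :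
    Tendsto z atTop (𝓝 0) := by
  have hfree : Tendsto (fun k => (T ^ k) (z 0)) atTop (𝓝 0) :=
    squeeze_zero_norm (fun k => (T ^ k).le_opNorm (z 0)) <| by
      simpa using hT.tendsto_atTop_zero.mul_const ‖z 0‖
  simpa only [add_zero] using (hfree.add (tendsto_sum_range_pow_apply_of_tendsto_zero hT hu)).congr
    fun k => (eq_pow_apply_add_sum_of_recurrence hz k).symm

variable {S : Set E}

def reachableSet (T : E →L[𝕜] E) (S : Set E) : Set E :=
  {y | ∃ v : ℕ → E, (∀ i, v i ∈ S) ∧ HasSum (fun i => (T ^ i) (v i)) y}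

lemma apply_add_mem_reachableSet {y w : E} (hy : y ∈ reachableSet T S) (hw : w ∈ S) :
    T y + w ∈ reachableSet T S := by
  obtain ⟨v, hvS, hv⟩ := hy
  refine ⟨fun | 0 => w | i + 1 => v i, fun | 0 => hw | i + 1 => hvS i, ?_⟩
  refine (hasSum_nat_add_iff' 1).mp ?_
  simpa [pow_succ', mul_apply_eq_comp] using hv.mapL T

lemma summable_pow_apply_of_norm_le [CompleteSpace E] (hT : Summable fun k => ‖T ^ k‖)
    {v : ℕ → E} {C : ℝ} (hv : ∀ i, ‖v i‖ ≤ C) : Summable fun i => (T ^ i) (v i) :=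
  .of_norm_bounded (hT.mul_right C) fun i => (T ^ i).le_opNorm_of_le (hv i)

lemma reachableSet_nonempty [CompleteSpace E] (hT : Summable fun k => ‖T ^ k‖)
    (hS : S.Nonempty) : (reachableSet T S).Nonempty := by
  obtain ⟨w, hw⟩ := hS
  exact ⟨_, fun _ => w, fun _ => hw,
    (summable_pow_apply_of_norm_le hT fun _ => le_rfl).hasSum⟩

theorem tendsto_infDist_reachableSet [CompleteSpace E] (hT : Summable fun k => ‖T ^ k‖)
    {x u s : ℕ → E} (hu : Tendsto u atTop (𝓝 0)) (hs : ∀ k, s k ∈ S)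
    (hx : ∀ k, x (k + 1) = T (x k) + u k + s k) :
    Tendsto (fun k => Metric.infDist (x k) (reachableSet T S)) atTop (𝓝 0) := by
  obtain ⟨y₀, hy₀⟩ := reachableSet_nonempty hT ⟨s 0, hs 0⟩
  let y : ℕ → E := fun k => Nat.rec y₀ (fun j yj => T yj + s j) k
  have hy : ∀ k, y k ∈ reachableSet T S := fun k => by
    induction k with
    | zero => exact hy₀
    | succ k ih => exact apply_add_mem_reachableSet ih (hs k)
  have hxy : Tendsto (fun k => x k - y k) atTop (𝓝 0) :=
    tendsto_zero_of_recurrence hT hu fun k => by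
      simp only [hx, y, map_sub]
      abel
  refine squeeze_zero (fun _ => Metric.infDist_nonneg) (fun k => ?_)
    (tendsto_zero_iff_norm_tendsto_zero.mp hxy)
  rw [← dist_eq_norm]
  exact Metric.infDist_le_dist_of_mem (hy k)

end LinearRecurrence

section Matrix

variable {n m : ℕ} (A : Matrix (Fin n) (Fin n) ℝ) (B : Matrix (Fin n) (Fin m) ℝ)

lemma ofLp_pow_toEuclideanCLM_toLp_mulVec (i : ℕ) (w : Fin m → ℝ) :
    WithLp.ofLp ((toEuclideanCLM (𝕜 := ℝ) A ^ i) (WithLp.toLp 2 (B *ᵥ w))) = (A ^ i * B) *ᵥ w := by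
  rw [← map_pow, ofLp_toEuclideanCLM, WithLp.ofLp_toLp, mulVec_mulVec]

lemma setOf_tsum_mulVec_eq_reachableSet {Ω : Set (Fin m → ℝ)} (hΩ : IsCompact Ω)
    (hA : Summable fun k => ‖toEuclideanCLM (𝕜 := ℝ) A ^ k‖) :
    {x : EuclideanSpace ℝ (Fin n) | ∃ ε : ℕ → Fin m → ℝ, (∀ i, ε i ∈ Ω) ∧
      (x : Fin n → ℝ) = ∑' i, (A ^ i * B) *ᵥ ε i} =
    reachableSet (toEuclideanCLM (𝕜 := ℝ) A) ((fun w => WithLp.toLp 2 (B *ᵥ w)) '' Ω) := by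
  obtain ⟨C, hC⟩ := isBounded_iff_forall_norm_le.mp (hΩ.image
    (f := fun w => WithLp.toLp 2 (B *ᵥ w)) (by fun_prop)).isBounded
  have hasSum_iff (ε : ℕ → Fin m → ℝ) (y : EuclideanSpace ℝ (Fin n)) :
      HasSum (fun i => (toEuclideanCLM (𝕜 := ℝ) A ^ i) (WithLp.toLp 2 (B *ᵥ ε i))) y ↔
        HasSum (fun i => (A ^ i * B) *ᵥ ε i) (WithLp.ofLp y) := by
    simp only [← ofLp_pow_toEuclideanCLM_toLp_mulVec]
    exact (EuclideanSpace.equiv (Fin n) ℝ).hasSum'.symm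
  ext y
  constructor
  · rintro ⟨ε, hε, hy⟩
    refine ⟨_, fun i => Set.mem_image_of_mem _ (hε i), (hasSum_iff ε y).mpr ?_⟩
    have hs := summable_pow_apply_of_norm_le hA fun i => hC _ (Set.mem_image_of_mem _ (hε i))
    exact hy ▸ ((hasSum_iff ε _).mp hs.hasSum).summable.hasSum
  · rintro ⟨v, hv, hsum⟩
    choose ε hε hvε using hv
    obtain rfl : v = fun i => WithLp.toLp 2 (B *ᵥ ε i) := funext fun i => (hvε i).symm
    exact ⟨ε, hε, ((hasSum_iff ε y).mp hsum).tsum_eq.symm⟩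

end Matrix

theorem stmt_19_general {n m : ℕ} (A : Matrix (Fin n) (Fin n) ℝ) (B : Matrix (Fin n) (Fin m) ℝ)
    (M θ : ℝ) (hθ : θ ∈ Set.Ioo (0 : ℝ) 1)
    (hA : ∀ k : ℕ, ‖Matrix.toEuclideanCLM (𝕜 := ℝ) (A ^ k)‖ ≤ M * θ ^ k)
    (Ω : Set (Fin m → ℝ)) (hΩc : IsCompact Ω)
    (Fbar : Set (EuclideanSpace ℝ (Fin n)))
    (hFbar : Fbar = {x : EuclideanSpace ℝ (Fin n) | ∃ ε : ℕ → Fin m → ℝ, (∀ i : ℕ, ε i ∈ Ω) ∧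
      (x : Fin n → ℝ) = ∑' i : ℕ, (A ^ i * B).mulVec (ε i)})
    (x u : ℕ → EuclideanSpace ℝ (Fin n)) (e : ℕ → Fin m → ℝ)
    (hu : Filter.Tendsto u Filter.atTop (nhds 0))
    (he : ∀ k : ℕ, e k ∈ Ω)
    (hx : ∀ k : ℕ, (x (k + 1) : Fin n → ℝ) =
      A.mulVec (x k) + (EuclideanSpace.equiv (Fin n) ℝ) (u k) + B.mulVec (e k)) :
    Filter.Tendsto (fun k : ℕ => Metric.infDist (x k) Fbar) Filter.atTop (nhds 0) := by
  have hT : Summable fun k => ‖toEuclideanCLM (𝕜 := ℝ) A ^ k‖ :=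
    .of_nonneg_of_le (fun _ => norm_nonneg _)
      (fun k => map_pow (toEuclideanCLM (𝕜 := ℝ)) A k ▸ hA k)
      ((summable_geometric_of_lt_one hθ.1.le hθ.2).mul_left M)
  rw [hFbar, setOf_tsum_mulVec_eq_reachableSet A B hΩc hT]
  refine tendsto_infDist_reachableSet hT hu (fun k => Set.mem_image_of_mem _ (he k)) fun k => ?_
  ext1
  simp [hx k]

/-- Let `A ∈ ℝ^{n×n}` with `‖Aᵏ‖ ≤ M θᵏ` (`M ≥ 1`, `θ ∈ (0,1)`,
Euclidean operator norm via `Matrix.toEuclideanCLM`), `B ∈ ℝ^{n×m}`, `Ω ⊆ ℝᵐ`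
nonempty compact, and `F̄ = {Σ_{i=0}^∞ Aⁱ B ε_i : ε_i ∈ Ω ∀i}` (a subset of
Euclidean space `ℝⁿ`). If `x_{k+1} = A x_k + u_k + B e_k` with `u_k → 0` and
`e_k ∈ Ω`, then the Euclidean distance from `x_k` to `F̄` tends to `0`. -/
theorem stmt_19 {n m : ℕ} (A : Matrix (Fin n) (Fin n) ℝ) (B : Matrix (Fin n) (Fin m) ℝ)
    (M θ : ℝ) (hM : 1 ≤ M) (hθ : θ ∈ Set.Ioo (0 : ℝ) 1)
    (hA : ∀ k : ℕ, ‖Matrix.toEuclideanCLM (𝕜 := ℝ) (A ^ k)‖ ≤ M * θ ^ k)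
    (Ω : Set (Fin m → ℝ)) (hΩne : Ω.Nonempty) (hΩc : IsCompact Ω)
    (Fbar : Set (EuclideanSpace ℝ (Fin n)))
    (hFbar : Fbar = {x : EuclideanSpace ℝ (Fin n) | ∃ ε : ℕ → Fin m → ℝ, (∀ i : ℕ, ε i ∈ Ω) ∧
      (x : Fin n → ℝ) = ∑' i : ℕ, (A ^ i * B).mulVec (ε i)})
    (x u : ℕ → EuclideanSpace ℝ (Fin n)) (e : ℕ → Fin m → ℝ)
    (hu : Filter.Tendsto u Filter.atTop (nhds 0))
    (he : ∀ k : ℕ, e k ∈ Ω)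
    (hx : ∀ k : ℕ, (x (k + 1) : Fin n → ℝ) =
      A.mulVec (x k) + (EuclideanSpace.equiv (Fin n) ℝ) (u k) + B.mulVec (e k)) :
    Filter.Tendsto (fun k : ℕ => Metric.infDist (x k) Fbar) Filter.atTop (nhds 0) :=
  stmt_19_general A B M θ hθ hA Ω hΩc Fbar hFbar x u e hu he hx
end
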